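/- arXiv:1203.3051 — 2 statements merged into one kernel-verified Lean document; each statement's English description precedes it below -/
import Mathlib

section
/- Let X and Y be scoring rules on a finite candidate set C of size m, given by non-increasing score vectors (x_1,…,x_m) and (y_1,…,y_m). Suppose there exist a profile P₁ and distinct candidates a₁, a₂ ∈ C such that the total X-score of a₁ in P₁ is strictly greater than that of a₂, while the total Y-score of a₁ in P₁ is strictly less than that of a₂ (this holds in particular whenever X and Y are different rules). Then the runoff combination X+Y is not consistent: there exist a tie-breaking order T on C and profiles P and P′ such that X+Y (using T for X, for Y, and for the runoff) elects the same candidate on P and on P′, but elects a different candidate on the concatenation P ++ P′. -/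
/-
Combining two different scoring rules by a run-off is not consistent.
Votes on the finite candidate set `C` (with `m = |C|`) are duplicate-free
lists of all candidates (earlier = more preferred); positions are 1-based.
-/

variable {C : Type*} [Fintype C] [DecidableEq C]

/-- `v` is a vote: a strict linear order of all candidates. -/
def ValidVote (v : List C) : Prop := v.Nodup ∧ v.toFinset = Finset.univ

/-- `P` is a profile: a finite list of votes. -/
def ValidProfile (P : List (List C)) : Prop := ∀ v ∈ P, ValidVote v

/-- `N P x y`: the number of votes in `P` ranking `x` above `y`. -/
def pairN (P : List (List C)) (x y : C) : ℕ :=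
  (P.filter fun v => v.idxOf x < v.idxOf y).length

/-- Total score of candidate `e` in profile `P` under the scoring vector `s`
(a candidate ranked at (1-based) position `r` in a vote receives `s r`). -/
def scoreTotal (s : ℕ → ℝ) (P : List (List C)) (e : C) : ℝ :=
  (P.map fun v => s (v.idxOf e + 1)).sum

open scoped Classical in
/-- The scoring-rule winner: the `T`-greatest candidate among those of maximal
total score. -/
noncomputable def scoringWinner [Nonempty C] (T : LinearOrder C) (s : ℕ → ℝ)
    (P : List (List C)) : C :=
  @Finset.max' C T (Finset.univ.filter fun e => ∀ z, scoreTotal s P z ≤ scoreTotal s P e) (by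
    obtain ⟨b, hb, hm⟩ :=
      Finset.exists_max_image Finset.univ (scoreTotal s P) Finset.univ_nonempty
    exact ⟨b, Finset.mem_filter.2 ⟨Finset.mem_univ _, fun z => hm z (Finset.mem_univ _)⟩⟩)

/-- Run-off combination `X + Y`: the common winner if `X` and `Y` agree;
otherwise the pairwise-majority winner between the two winners, with the
`T`-greater candidate winning a tied run-off. -/
noncomputable def runoffWinner (T : LinearOrder C) (X Y : List (List C) → C)
    (P : List (List C)) : C :=
  let x := X P
  let y := Y P
  if x = y then x
  else if pairN P y x < pairN P x y then x
  else if pairN P x y < pairN P y x then y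
  else if T.lt x y then y else x

/-!
Swapping the roles of `X` and `Y` if necessary, `a₁` beats `a₂` in `P₁` at least as often as
conversely; then `m ≥ 3`, because for `m = 2` both score differences have the sign of this
majority. Appending to `P₁` many copies of the two blocks in which `a₁`, resp. `a₂`, is on top
while the other candidates run through all cyclic shifts makes `a₁` the unique `X`-winner and
`a₂` the unique `Y`-winner without changing the pairwise margin of `a₁` over `a₂`, so `X + Y`
elects `a₁` (the tie-breaking order puts `a₁` on top). Copies of the Condorcet cycle
`a₁ b a₂`, `a₂ a₁ b`, `b a₂ a₁` tie `a₁`, `a₂`, `b` for every scoring rule, so there `X`, `Y`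
and `X + Y` all elect `a₁`. On the union the `X`- and `Y`-winners stay `a₁` and `a₂`, but with
enough copies of the cycle `a₂` beats `a₁` in the run-off.
-/

open Filter

section Profiles

variable {α : Type*}

def copies (n : ℕ) (P : List (List α)) : List (List α) := (List.replicate n P).flatten

lemma copies_succ (n : ℕ) (P : List (List α)) : copies (n + 1) P = P ++ copies n P := by
  simp [copies, List.replicate_succ]

variable [DecidableEq α]

lemma scoreTotal_cons (s : ℕ → ℝ) (v : List α) (P : List (List α)) (e : α) :
    scoreTotal s (v :: P) e = s (v.idxOf e + 1) + scoreTotal s P e := by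
  simp [scoreTotal]

lemma scoreTotal_append (s : ℕ → ℝ) (P Q : List (List α)) (e : α) :
    scoreTotal s (P ++ Q) e = scoreTotal s P e + scoreTotal s Q e := by
  simp [scoreTotal]

lemma scoreTotal_copies (s : ℕ → ℝ) (n : ℕ) (P : List (List α)) (e : α) :
    scoreTotal s (copies n P) e = n * scoreTotal s P e := by
  induction n with
  | zero => simp [copies, scoreTotal]
  | succ n ih => rw [copies_succ, scoreTotal_append, ih]; push_cast; ring

lemma pairN_cons (v : List α) (P : List (List α)) (a b : α) :
    pairN (v :: P) a b = (if v.idxOf a < v.idxOf b then 1 else 0) + pairN P a b := by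
  by_cases h : v.idxOf a < v.idxOf b <;> simp [pairN, h, add_comm]

lemma pairN_append (P Q : List (List α)) (a b : α) :
    pairN (P ++ Q) a b = pairN P a b + pairN Q a b := by
  simp [pairN]

lemma pairN_copies (n : ℕ) (P : List (List α)) (a b : α) :
    pairN (copies n P) a b = n * pairN P a b := by
  induction n with
  | zero => simp [copies, pairN]
  | succ n ih => rw [copies_succ, pairN_append, ih]; ring

def IsScoreMax (s : ℕ → ℝ) (P : List (List α)) (w : α) : Prop :=
  ∀ z, scoreTotal s P z ≤ scoreTotal s P w

def IsStrictScoreMax (s : ℕ → ℝ) (P : List (List α)) (w : α) : Prop :=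
  ∀ z, z ≠ w → scoreTotal s P z < scoreTotal s P w

lemma IsScoreMax.copies {s : ℕ → ℝ} {P : List (List α)} {w : α} (h : IsScoreMax s P w)
    (n : ℕ) : IsScoreMax s (copies n P) w := fun z => by
  simp only [scoreTotal_copies]
  exact mul_le_mul_of_nonneg_left (h z) n.cast_nonneg

lemma IsStrictScoreMax.append {s : ℕ → ℝ} {P Q : List (List α)} {w : α}
    (hP : IsStrictScoreMax s P w) (hQ : IsScoreMax s Q w) : IsStrictScoreMax s (P ++ Q) w :=
  fun z hz => by
    simp only [scoreTotal_append]
    exact add_lt_add_of_lt_of_le (hP z hz) (hQ z)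

lemma eventually_add_mul_lt {u v p q : ℝ} (h : p < q ∨ p = q ∧ u < v) :
    ∀ᶠ t : ℕ in atTop, u + t * p < v + t * q := by
  rcases h with hpq | ⟨rfl, huv⟩
  · filter_upwards [tendsto_natCast_atTop_atTop.eventually_gt_atTop ((u - v) / (q - p))]
      with t ht
    have := (div_lt_iff₀ (sub_pos.2 hpq)).1 ht
    linarith
  · exact Eventually.of_forall fun t => by linarith

lemma eventually_isStrictScoreMax_append_copies [Finite α] (s : ℕ → ℝ) (P B : List (List α))
    (w : α) (h : ∀ z, z ≠ w → scoreTotal s B z < scoreTotal s B w ∨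
      scoreTotal s B z = scoreTotal s B w ∧ scoreTotal s P z < scoreTotal s P w) :
    ∀ᶠ t in atTop, IsStrictScoreMax s (P ++ copies t B) w := by
  refine eventually_all.2 fun z => eventually_imp_distrib_left.2 fun hz => ?_
  simp only [scoreTotal_append, scoreTotal_copies]
  exact eventually_add_mul_lt (h z hz)

end Profiles

section Votes

lemma ValidVote.mem {v : List C} (hv : ValidVote v) (e : C) : e ∈ v := by
  rw [← List.mem_toFinset, hv.2]; exact Finset.mem_univ e

lemma ValidVote.idxOf_lt_card {v : List C} (hv : ValidVote v) (e : C) :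
    v.idxOf e < Fintype.card C := by
  rw [← Finset.card_univ, ← hv.2, List.toFinset_card_of_nodup hv.1]
  exact List.idxOf_lt_length_iff.2 (hv.mem e)

lemma ValidVote.idxOf_ne {v : List C} (hv : ValidVote v) {a b : C} (hab : a ≠ b) :
    v.idxOf a ≠ v.idxOf b :=
  fun h => hab ((List.idxOf_inj (hv.mem a)).1 h)

lemma ValidVote.perm {v w : List C} (hv : ValidVote v) (h : v.Perm w) : ValidVote w :=
  ⟨h.nodup_iff.1 hv.1, List.toFinset_eq_of_perm _ _ h ▸ hv.2⟩

lemma ValidProfile.append {P Q : List (List C)} (hP : ValidProfile P) (hQ : ValidProfile Q) :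
    ValidProfile (P ++ Q) :=
  List.forall_mem_append.2 ⟨hP, hQ⟩

lemma ValidProfile.copies {P : List (List C)} (hP : ValidProfile P) (n : ℕ) :
    ValidProfile (copies n P) := by
  intro v hv
  simp only [_root_.copies, List.mem_flatten, List.mem_replicate] at hv
  obtain ⟨_, ⟨_, rfl⟩, hv⟩ := hv
  exact hP v hv

noncomputable def completeVote (l : List C) : List C := l ++ (Finset.univ \ l.toFinset).toList

lemma validVote_completeVote {l : List C} (hl : l.Nodup) : ValidVote (completeVote l) := by
  refine ⟨List.nodup_append.2 ⟨hl, Finset.nodup_toList _, ?_⟩, ?_⟩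
  · intro a ha b hb
    simp only [Finset.mem_toList, Finset.mem_sdiff, List.mem_toFinset] at hb
    exact fun hab => hb.2 (hab ▸ ha)
  · ext; simp [completeVote]

lemma exists_ne_and_ne (h : 3 ≤ Fintype.card C) (a b : C) : ∃ c, c ≠ a ∧ c ≠ b := by
  obtain ⟨c, hc, hcb⟩ := Finset.exists_mem_ne (s := Finset.univ.erase a)
    (by rw [Finset.card_erase_of_mem (Finset.mem_univ a), Finset.card_univ]; omega) b
  exact ⟨c, Finset.ne_of_mem_erase hc, hcb⟩

end Votes

section ScoringVectors

variable {s : ℕ → ℝ}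

lemma ValidVote.score_idxOf_le (hs : AntitoneOn s (Set.Icc 1 (Fintype.card C))) {v : List C}
    (hv : ValidVote v) (e : C) {r : ℕ} (hr : 1 ≤ r) (hre : r ≤ v.idxOf e + 1) :
    s (v.idxOf e + 1) ≤ s r := by
  have := hv.idxOf_lt_card e
  exact hs ⟨hr, by omega⟩ ⟨by omega, by omega⟩ hre

lemma ValidVote.score_card_le (hs : AntitoneOn s (Set.Icc 1 (Fintype.card C))) {v : List C}
    (hv : ValidVote v) (e : C) : s (Fintype.card C) ≤ s (v.idxOf e + 1) := by
  have := hv.idxOf_lt_card e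
  exact hs ⟨by omega, by omega⟩ ⟨by omega, le_rfl⟩ (by omega)

lemma score_card_lt_score_one_of_scoreTotal_lt (hs : AntitoneOn s (Set.Icc 1 (Fintype.card C)))
    {P : List (List C)} (hP : ValidProfile P) {a b : C}
    (h : scoreTotal s P a < scoreTotal s P b) : s (Fintype.card C) < s 1 := by
  by_contra! hle
  have hconst : ∀ e, scoreTotal s P e = (P.map fun _ => s 1).sum := fun e =>
    congrArg List.sum <| List.map_congr_left fun v hv =>
      le_antisymm ((hP v hv).score_idxOf_le hs e le_rfl (by omega))
        (hle.trans ((hP v hv).score_card_le hs e))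
  exact h.ne (by rw [hconst, hconst])

lemma scoreTotal_sub_of_card_eq_two (hm : Fintype.card C = 2)
    {P : List (List C)} (hP : ValidProfile P) {a b : C} (hab : a ≠ b) :
    scoreTotal s P a - scoreTotal s P b =
      ((pairN P a b : ℝ) - pairN P b a) * (s 1 - s 2) := by
  induction P with
  | nil => simp [scoreTotal, pairN]
  | cons v P ih =>
    obtain ⟨hv, hP⟩ := List.forall_mem_cons.1 hP
    have ha := hv.idxOf_lt_card a
    have hb := hv.idxOf_lt_card b
    have hne := hv.idxOf_ne hab
    have hpos : v.idxOf a = 0 ∧ v.idxOf b = 1 ∨ v.idxOf a = 1 ∧ v.idxOf b = 0 := by omega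
    rw [scoreTotal_cons, scoreTotal_cons, pairN_cons, pairN_cons]
    rcases hpos with ⟨h₁, h₂⟩ | ⟨h₁, h₂⟩ <;> simp only [h₁, h₂] <;> norm_num <;> linarith [ih hP]

lemma three_le_card (hs : AntitoneOn s (Set.Icc 1 (Fintype.card C)))
    {P : List (List C)} (hP : ValidProfile P) {a b : C} (hab : a ≠ b)
    (hN : pairN P b a ≤ pairN P a b) (h : scoreTotal s P a < scoreTotal s P b) :
    3 ≤ Fintype.card C := by
  have h2 : 1 < Fintype.card C := Fintype.one_lt_card_iff.2 ⟨a, b, hab⟩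
  by_contra! h3
  have hm : Fintype.card C = 2 := by omega
  have hs12 : s 2 ≤ s 1 := hs ⟨le_rfl, by omega⟩ ⟨by norm_num, hm.ge⟩ (by norm_num)
  have hN' : (0 : ℝ) ≤ (pairN P a b : ℝ) - pairN P b a := sub_nonneg.2 (by exact_mod_cast hN)
  have := scoreTotal_sub_of_card_eq_two (s := s) hm hP hab
  nlinarith [mul_nonneg hN' (sub_nonneg.2 hs12)]

end ScoringVectors

section Rotations

variable {α : Type*} [DecidableEq α]

lemma idxOf_rotate {w : List α} (hw : w.Nodup) {e : α} (he : e ∈ w) {i : ℕ}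
    (hi : i < w.length) :
    (w.rotate i).idxOf e =
      if i ≤ w.idxOf e then w.idxOf e - i else w.idxOf e + w.length - i := by
  have hidx : w.idxOf e < w.length := List.idxOf_lt_length_iff.2 he
  set j := if i ≤ w.idxOf e then w.idxOf e - i else w.idxOf e + w.length - i
  have hj : j < (w.rotate i).length := by
    rw [List.length_rotate]; simp only [j]; split_ifs <;> omega
  have hmod : (j + i) % w.length = w.idxOf e := by
    simp only [j]; split_ifs
    · rw [Nat.sub_add_cancel ‹_›, Nat.mod_eq_of_lt hidx]
    · rw [Nat.sub_add_cancel (by omega), Nat.add_mod_right, Nat.mod_eq_of_lt hidx]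
  have hget : (w.rotate i)[j] = e := by
    simp only [List.getElem_rotate, hmod, List.getElem_idxOf]
  rw [← hget, (List.nodup_rotate.2 hw).idxOf_getElem]

lemma sum_idxOf_rotate {M : Type*} [AddCommMonoid M] {w : List α} (hw : w.Nodup) {e : α}
    (he : e ∈ w) (f : ℕ → M) :
    ∑ i ∈ Finset.range w.length, f ((w.rotate i).idxOf e) =
      ∑ j ∈ Finset.range w.length, f j := by
  have hidx : w.idxOf e < w.length := List.idxOf_lt_length_iff.2 he
  -- `i ↦ idxOf e - i (mod length)` is an involution of `range length`
  let g : ℕ → ℕ := fun i => if i ≤ w.idxOf e then w.idxOf e - i else w.idxOf e + w.length - i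
  refine Finset.sum_nbij' g g ?_ ?_ ?_ ?_ ?_ <;> intro i hi <;>
    simp only [Finset.mem_range] at hi ⊢
  · simp only [g]; split_ifs <;> omega
  · simp only [g]; split_ifs <;> omega
  · simp only [g]; split_ifs <;> omega
  · simp only [g]; split_ifs <;> omega
  · rw [idxOf_rotate hw he hi]

lemma sum_map_range_eq_finset_sum {M : Type*} [AddCommMonoid M] (n : ℕ) (f : ℕ → M) :
    ((List.range n).map f).sum = ∑ i ∈ Finset.range n, f i := by
  simp [Finset.sum, Finset.range, Multiset.range]

end Rotations

section RotationBlock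

noncomputable def rotationBlock (a : C) : List (List C) :=
  (List.range (Fintype.card C - 1)).map fun i => a :: (Finset.univ.erase a).toList.rotate i

lemma length_toList_erase_univ (a : C) :
    (Finset.univ.erase a).toList.length = Fintype.card C - 1 := by
  simp [Finset.card_erase_of_mem]

lemma validProfile_rotationBlock (a : C) : ValidProfile (rotationBlock a) := by
  have hv : ValidVote (a :: (Finset.univ.erase a).toList) :=
    ⟨List.nodup_cons.2 ⟨by simp, Finset.nodup_toList _⟩, by simp [Finset.insert_erase]⟩
  intro v hv'
  simp only [rotationBlock, List.mem_map, List.mem_range] at hv'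
  obtain ⟨i, -, rfl⟩ := hv'
  exact hv.perm ((List.rotate_perm _ i).symm.cons a)

lemma scoreTotal_rotationBlock_self (s : ℕ → ℝ) (a : C) :
    scoreTotal s (rotationBlock a) a = (Fintype.card C - 1 : ℕ) * s 1 := by
  simp [scoreTotal, rotationBlock, Function.comp_def]

lemma scoreTotal_rotationBlock_of_ne (s : ℕ → ℝ) {a z : C} (hz : z ≠ a) :
    scoreTotal s (rotationBlock a) z = ∑ j ∈ Finset.range (Fintype.card C - 1), s (j + 2) := by
  have hmem : z ∈ (Finset.univ.erase a).toList := by simpa using hz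
  rw [← length_toList_erase_univ a, ← sum_idxOf_rotate (Finset.nodup_toList _) hmem,
    ← sum_map_range_eq_finset_sum]
  simp [scoreTotal, rotationBlock, Function.comp_def, List.idxOf_cons_ne _ hz.symm]

lemma scoreTotal_rotationBlock_lt {s : ℕ → ℝ} (hs : AntitoneOn s (Set.Icc 1 (Fintype.card C)))
    (hs₁ : s (Fintype.card C) < s 1) {a z : C} (hz : z ≠ a) :
    scoreTotal s (rotationBlock a) z < scoreTotal s (rotationBlock a) a := by
  have hm : 1 < Fintype.card C := Fintype.one_lt_card_iff.2 ⟨z, a, hz⟩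
  have hconst : ((Fintype.card C - 1 : ℕ) : ℝ) * s 1 =
      ∑ _j ∈ Finset.range (Fintype.card C - 1), s 1 := by simp
  rw [scoreTotal_rotationBlock_of_ne s hz, scoreTotal_rotationBlock_self, hconst]
  refine Finset.sum_lt_sum (fun j hj => ?_)
    ⟨Fintype.card C - 2, Finset.mem_range.2 (by omega), ?_⟩
  · have := Finset.mem_range.1 hj
    exact hs ⟨le_rfl, by omega⟩ ⟨by omega, by omega⟩ (by omega)
  · rwa [show Fintype.card C - 2 + 2 = Fintype.card C by omega]

lemma pairN_rotationBlock_self_left {a z : C} (hz : z ≠ a) :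
    pairN (rotationBlock a) a z = Fintype.card C - 1 := by
  unfold pairN
  rw [List.filter_eq_self.2 (by simp [rotationBlock, List.idxOf_cons_ne _ hz.symm])]
  simp [rotationBlock]

lemma pairN_rotationBlock_self_right {a z : C} (hz : z ≠ a) :
    pairN (rotationBlock a) z a = 0 := by
  unfold pairN
  rw [List.filter_eq_nil_iff.2 (by simp [rotationBlock, List.idxOf_cons_ne _ hz.symm])]
  rfl

lemma scoreTotal_rotationBlock_append_eq (s : ℕ → ℝ) {a b : C} (hab : a ≠ b) :
    scoreTotal s (rotationBlock a ++ rotationBlock b) b =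
      scoreTotal s (rotationBlock a ++ rotationBlock b) a := by
  simp only [scoreTotal_append, scoreTotal_rotationBlock_self,
    scoreTotal_rotationBlock_of_ne s hab, scoreTotal_rotationBlock_of_ne s hab.symm, add_comm]

lemma pairN_rotationBlock_append_comm {a b : C} (hab : a ≠ b) :
    pairN (rotationBlock a ++ rotationBlock b) a b =
      pairN (rotationBlock a ++ rotationBlock b) b a := by
  rw [pairN_append, pairN_append, pairN_rotationBlock_self_left hab.symm,
    pairN_rotationBlock_self_right hab.symm, pairN_rotationBlock_self_left hab,
    pairN_rotationBlock_self_right hab, add_zero, zero_add]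

lemma scoreTotal_rotationBlock_append_lt {s : ℕ → ℝ}
    (hs : AntitoneOn s (Set.Icc 1 (Fintype.card C))) (hs₁ : s (Fintype.card C) < s 1)
    {a b z : C} (hza : z ≠ a) (hzb : z ≠ b) :
    scoreTotal s (rotationBlock a ++ rotationBlock b) z <
      scoreTotal s (rotationBlock a ++ rotationBlock b) a := by
  rw [scoreTotal_append, scoreTotal_append]
  refine add_lt_add_of_lt_of_le (scoreTotal_rotationBlock_lt hs hs₁ hza) ?_
  by_cases hab : a = b
  · exact hab ▸ (scoreTotal_rotationBlock_lt hs hs₁ hzb).le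
  · rw [scoreTotal_rotationBlock_of_ne s hzb, scoreTotal_rotationBlock_of_ne s hab]

end RotationBlock

section CycleBlock

variable {a b c : C}

noncomputable def cycleBlock (a b c : C) : List (List C) :=
  [completeVote [a, c, b], completeVote [b, a, c], completeVote [c, b, a]]

variable (hab : a ≠ b) (hac : a ≠ c) (hbc : b ≠ c)
include hab hac hbc

lemma validProfile_cycleBlock : ValidProfile (cycleBlock a b c) := by
  simp only [ValidProfile, cycleBlock, List.forall_mem_cons, List.not_mem_nil,
    IsEmpty.forall_iff, implies_true, and_true]
  refine ⟨validVote_completeVote ?_, validVote_completeVote ?_, validVote_completeVote ?_⟩ <;>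
    simp [hab, hac, hbc, hab.symm, hac.symm, hbc.symm]

lemma scoreTotal_cycleBlock_of_mem (s : ℕ → ℝ) {w : C} (hw : w = a ∨ w = b ∨ w = c) :
    scoreTotal s (cycleBlock a b c) w = s 1 + s 2 + s 3 := by
  rcases hw with rfl | rfl | rfl <;>
    simp [scoreTotal, cycleBlock, completeVote, List.idxOf_cons_ne,
      hab, hac, hbc, hab.symm, hac.symm, hbc.symm] <;> ring

lemma scoreTotal_cycleBlock_le {s : ℕ → ℝ} (hs : AntitoneOn s (Set.Icc 1 (Fintype.card C)))
    (z : C) : scoreTotal s (cycleBlock a b c) z ≤ s 1 + s 2 + s 3 := by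
  by_cases hz : z = a ∨ z = b ∨ z = c
  · exact (scoreTotal_cycleBlock_of_mem hab hac hbc s hz).le
  have hlate : ∀ v ∈ cycleBlock a b c, 3 ≤ v.idxOf z := by
    obtain ⟨hza, hzb, hzc⟩ := not_or.1 hz |>.imp_right not_or.1
    simp [cycleBlock, completeVote, List.idxOf_cons_ne _ (Ne.symm hza),
      List.idxOf_cons_ne _ (Ne.symm hzb), List.idxOf_cons_ne _ (Ne.symm hzc)]
  have hK := validProfile_cycleBlock hab hac hbc
  have hle : ∀ v ∈ cycleBlock a b c, s (v.idxOf z + 1) ≤ s 3 := fun v hv =>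
    (hK v hv).score_idxOf_le hs z (by norm_num) (by have := hlate v hv; omega)
  have hm : 3 < Fintype.card C := by
    have := (hK _ List.mem_cons_self).idxOf_lt_card z
    have := hlate _ List.mem_cons_self
    omega
  have h32 : s 3 ≤ s 2 := hs ⟨by norm_num, by omega⟩ ⟨by norm_num, by omega⟩ (by norm_num)
  have h21 : s 2 ≤ s 1 := hs ⟨le_rfl, by omega⟩ ⟨by norm_num, by omega⟩ (by norm_num)
  simp only [cycleBlock, List.forall_mem_cons] at hle
  simp only [scoreTotal, cycleBlock, List.map_cons, List.map_nil, List.sum_cons, List.sum_nil]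
  linarith [hle.1, hle.2.1, hle.2.2.1]

lemma isScoreMax_cycleBlock {s : ℕ → ℝ} (hs : AntitoneOn s (Set.Icc 1 (Fintype.card C)))
    {w : C} (hw : w = a ∨ w = b ∨ w = c) : IsScoreMax s (cycleBlock a b c) w := fun z => by
  rw [scoreTotal_cycleBlock_of_mem hab hac hbc s hw]
  exact scoreTotal_cycleBlock_le hab hac hbc hs z

lemma pairN_cycleBlock_left : pairN (cycleBlock a b c) a b = 1 := by
  simp [pairN, cycleBlock, completeVote, List.idxOf_cons_ne, hab, hab.symm, hac.symm, hbc.symm]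

lemma pairN_cycleBlock_right : pairN (cycleBlock a b c) b a = 2 := by
  simp [pairN, cycleBlock, completeVote, List.idxOf_cons_ne, hab, hab.symm, hac.symm, hbc.symm]

end CycleBlock

section Runoff

variable {α : Type*} [DecidableEq α] (T : LinearOrder α) (X Y : List (List α) → α)
  {P : List (List α)} {a b : α}

lemma runoffWinner_comm (P : List (List α)) : runoffWinner T X Y P = runoffWinner T Y X P := by
  let _ := T
  simp only [runoffWinner]
  by_cases h : X P = Y P
  · simp [h]
  rw [if_neg h, if_neg (Ne.symm h)]
  split_ifs with h₁ h₂ h₃ h₄ h₅ h₆ <;> first | rfl | omega | skip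
  · exact absurd h₄ h₅.asymm
  · exact le_antisymm (not_lt.1 h₆) (not_lt.1 h₄)

lemma runoffWinner_eq_of_eq (hX : X P = a) (hY : Y P = a) : runoffWinner T X Y P = a := by
  simp [runoffWinner, hX, hY]

lemma runoffWinner_eq_left (hX : X P = a) (hY : Y P = b) (hN : pairN P b a ≤ pairN P a b)
    (hT : T.le b a) : runoffWinner T X Y P = a := by
  let _ := T
  have := not_lt_of_ge hT
  simp only [runoffWinner, hX, hY]
  split_ifs <;> first | rfl | omega

lemma runoffWinner_eq_right (hX : X P = a) (hY : Y P = b) (hN : pairN P a b < pairN P b a) :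
    runoffWinner T X Y P = b := by
  simp only [runoffWinner, hX, hY]
  split_ifs <;> first | rfl | omega

end Runoff

section Winners

variable [Nonempty C] (T : LinearOrder C) {s : ℕ → ℝ} {P : List (List C)} {w : C}

lemma isScoreMax_scoringWinner : IsScoreMax s P (scoringWinner T s P) := by
  let _ := T
  exact (Finset.mem_filter.1 (Finset.max'_mem _ _)).2

lemma scoringWinner_eq_of_isScoreMax (hw : IsScoreMax s P w) (hT : ∀ z, T.le z w) :
    scoringWinner T s P = w := by
  let _ := T
  classical
  exact le_antisymm (Finset.max'_le _ _ _ fun z _ => hT z)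
    (Finset.le_max' _ _ (Finset.mem_filter.2 ⟨Finset.mem_univ _, fun z => hw z⟩))

lemma scoringWinner_eq_of_isStrictScoreMax (hw : IsStrictScoreMax s P w) :
    scoringWinner T s P = w := by
  by_contra hne
  exact (hw _ hne).not_ge (isScoreMax_scoringWinner T w)

end Winners

@[reducible] noncomputable def topOrder (a : C) : LinearOrder C :=
  LinearOrder.lift' (fun c => if c = a then Fintype.card C else (Fintype.equivFin C c : ℕ))
    fun u v h => by
      dsimp only at h
      split_ifs at h with hu hv hv
      · exact hu.trans hv.symm
      · exact absurd h.symm (Fintype.equivFin C v).isLt.ne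
      · exact absurd h (Fintype.equivFin C u).isLt.ne
      · exact (Fintype.equivFin C).injective (Fin.ext h)

lemma topOrder_le (a z : C) : (topOrder a).le z a := by
  change (if z = a then Fintype.card C else (Fintype.equivFin C z : ℕ)) ≤
    (if a = a then Fintype.card C else (Fintype.equivFin C a : ℕ))
  rw [if_pos rfl]
  split_ifs
  exacts [le_rfl, (Fintype.equivFin C z).isLt.le]

lemma exists_isStrictScoreMax_rotationBlocks {x y : ℕ → ℝ}
    (hx : AntitoneOn x (Set.Icc 1 (Fintype.card C)))
    (hy : AntitoneOn y (Set.Icc 1 (Fintype.card C)))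
    {P : List (List C)} (hP : ValidProfile P) {a b : C} (hab : a ≠ b)
    (hX : scoreTotal x P b < scoreTotal x P a) (hY : scoreTotal y P a < scoreTotal y P b) :
    ∃ t, IsStrictScoreMax x (P ++ copies t (rotationBlock a ++ rotationBlock b)) a ∧
      IsStrictScoreMax y (P ++ copies t (rotationBlock a ++ rotationBlock b)) b := by
  have hx₁ := score_card_lt_score_one_of_scoreTotal_lt hx hP hX
  have hy₁ := score_card_lt_score_one_of_scoreTotal_lt hy hP hY
  have htie (s : ℕ → ℝ) := scoreTotal_rotationBlock_append_eq s hab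
  have hXt := eventually_isStrictScoreMax_append_copies x P _ a fun z hza => by
    by_cases hzb : z = b
    · subst hzb; exact Or.inr ⟨htie x, hX⟩
    · exact Or.inl (scoreTotal_rotationBlock_append_lt hx hx₁ hza hzb)
  have hYt := eventually_isStrictScoreMax_append_copies y P _ b fun z hzb => by
    by_cases hza : z = a
    · subst hza; exact Or.inr ⟨(htie y).symm, hY⟩
    · exact Or.inl (htie y ▸ scoreTotal_rotationBlock_append_lt hy hy₁ hza hzb)
  exact (hXt.and hYt).exists

lemma runoff_not_consistent_of_pairN_le [Nonempty C] {x y : ℕ → ℝ}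
    (hx : AntitoneOn x (Set.Icc 1 (Fintype.card C)))
    (hy : AntitoneOn y (Set.Icc 1 (Fintype.card C)))
    {P₁ : List (List C)} (hP₁ : ValidProfile P₁) {a₁ a₂ : C} (ha : a₁ ≠ a₂)
    (hXgt : scoreTotal x P₁ a₂ < scoreTotal x P₁ a₁)
    (hYlt : scoreTotal y P₁ a₁ < scoreTotal y P₁ a₂)
    (hN : pairN P₁ a₂ a₁ ≤ pairN P₁ a₁ a₂) :
    ∃ (T : LinearOrder C) (P P' : List (List C)),
      ValidProfile P ∧ ValidProfile P' ∧
      runoffWinner T (scoringWinner T x) (scoringWinner T y) P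
        = runoffWinner T (scoringWinner T x) (scoringWinner T y) P' ∧
      runoffWinner T (scoringWinner T x) (scoringWinner T y) (P ++ P')
        ≠ runoffWinner T (scoringWinner T x) (scoringWinner T y) P := by
  obtain ⟨b, hb₁, hb₂⟩ := exists_ne_and_ne (three_le_card hy hP₁ ha hN hYlt) a₁ a₂
  obtain ⟨t, hXP, hYP⟩ := exists_isStrictScoreMax_rotationBlocks hx hy hP₁ ha hXgt hYlt
  set P := P₁ ++ copies t (rotationBlock a₁ ++ rotationBlock a₂)
  set Q := copies (pairN P₁ a₁ a₂ + 1) (cycleBlock a₁ a₂ b)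
  have hvP : ValidProfile P :=
    hP₁.append (((validProfile_rotationBlock a₁).append (validProfile_rotationBlock a₂)).copies t)
  have hvQ : ValidProfile Q := (validProfile_cycleBlock ha hb₁.symm hb₂.symm).copies _
  have hXQ : IsScoreMax x Q a₁ :=
    (isScoreMax_cycleBlock ha hb₁.symm hb₂.symm hx (.inl rfl)).copies _
  have hYQ₁ : IsScoreMax y Q a₁ :=
    (isScoreMax_cycleBlock ha hb₁.symm hb₂.symm hy (.inl rfl)).copies _
  have hYQ₂ : IsScoreMax y Q a₂ :=
    (isScoreMax_cycleBlock ha hb₁.symm hb₂.symm hy (.inr (.inl rfl))).copies _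
  have hNP : pairN P a₂ a₁ ≤ pairN P a₁ a₂ := by
    simp only [P, pairN_append, pairN_copies, pairN_rotationBlock_append_comm ha]
    omega
  have hNPQ : pairN (P ++ Q) a₁ a₂ < pairN (P ++ Q) a₂ a₁ := by
    simp only [P, Q, pairN_append, pairN_copies, pairN_rotationBlock_append_comm ha,
      pairN_cycleBlock_left ha hb₁.symm hb₂.symm, pairN_cycleBlock_right ha hb₁.symm hb₂.symm]
    omega
  let T := topOrder a₁
  have hRP : runoffWinner T (scoringWinner T x) (scoringWinner T y) P = a₁ :=
    runoffWinner_eq_left T _ _ (scoringWinner_eq_of_isStrictScoreMax T hXP)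
      (scoringWinner_eq_of_isStrictScoreMax T hYP) hNP (topOrder_le a₁ a₂)
  have hRQ : runoffWinner T (scoringWinner T x) (scoringWinner T y) Q = a₁ :=
    runoffWinner_eq_of_eq T _ _ (scoringWinner_eq_of_isScoreMax T hXQ (topOrder_le a₁))
      (scoringWinner_eq_of_isScoreMax T hYQ₁ (topOrder_le a₁))
  have hRPQ : runoffWinner T (scoringWinner T x) (scoringWinner T y) (P ++ Q) = a₂ :=
    runoffWinner_eq_right T _ _ (scoringWinner_eq_of_isStrictScoreMax T (hXP.append hXQ))
      (scoringWinner_eq_of_isStrictScoreMax T (hYP.append hYQ₂)) hNPQ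
  exact ⟨T, P, Q, hvP, hvQ, hRP.trans hRQ.symm, hRPQ.trans_ne (hRP ▸ ha.symm)⟩

/-- Let `X` and `Y` be scoring rules given by non-increasing scoring vectors
`x` and `y` (positions `1,…,m`, `m = |C|`). If on some profile `P₁` two
distinct candidates `a₁, a₂` satisfy: `a₁` has strictly larger `X`-score than
`a₂` but strictly smaller `Y`-score, then `X + Y` is not consistent: there are
a tie-breaking order `T` and profiles `P`, `P′` on which `X + Y` (using `T`
throughout) elects the same candidate, yet elects a different candidate on
`P ++ P′`. -/
theorem runoff_scoring_not_consistent [Nonempty C]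
    (x y : ℕ → ℝ)
    (hx : ∀ r r', 1 ≤ r → r ≤ r' → r' ≤ Fintype.card C → x r' ≤ x r)
    (hy : ∀ r r', 1 ≤ r → r ≤ r' → r' ≤ Fintype.card C → y r' ≤ y r)
    (P₁ : List (List C)) (hP₁ : ValidProfile P₁)
    (a₁ a₂ : C) (ha : a₁ ≠ a₂)
    (hXgt : scoreTotal x P₁ a₂ < scoreTotal x P₁ a₁)
    (hYlt : scoreTotal y P₁ a₁ < scoreTotal y P₁ a₂) :
    ∃ (T : LinearOrder C) (P P' : List (List C)),
      ValidProfile P ∧ ValidProfile P' ∧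
      runoffWinner T (scoringWinner T x) (scoringWinner T y) P
        = runoffWinner T (scoringWinner T x) (scoringWinner T y) P' ∧
      runoffWinner T (scoringWinner T x) (scoringWinner T y) (P ++ P')
        ≠ runoffWinner T (scoringWinner T x) (scoringWinner T y) P := by
  have hx' : AntitoneOn x (Set.Icc 1 (Fintype.card C)) :=
    fun r hr r' hr' h => hx r r' hr.1 h hr'.2
  have hy' : AntitoneOn y (Set.Icc 1 (Fintype.card C)) :=
    fun r hr r' hr' h => hy r r' hr.1 h hr'.2
  rcases le_total (pairN P₁ a₂ a₁) (pairN P₁ a₁ a₂) with hN | hN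
  · exact runoff_not_consistent_of_pairN_le hx' hy' hP₁ ha hXgt hYlt hN
  · obtain ⟨T, P, P', hP, hP', hPP', hne⟩ :=
      runoff_not_consistent_of_pairN_le hy' hx' hP₁ ha.symm hYlt hXgt hN
    simp only [runoffWinner_comm T (scoringWinner T y)] at hPP' hne
    exact ⟨T, P, P', hP, hP', hPP', hne⟩
end

section
/- Let X and Y be scoring rules on a candidate set C of size m given by non-increasing vectors (x_1,…,x_m) and (y_1,…,y_m), let T be a tie-breaking order on C, let P be a profile, let c and a be distinct candidates, and let i ≠ j be positions in {1,…,m}. Write s_X(e) and s_Y(e) for the total X- and Y-scores of candidate e in P. Assume that s_X(a) + x_j < s_X(c) + x_i, or these are equal and c is T-greater than a; and that s_Y(c) + y_i < s_Y(a) + y_j, or these are equal and a is T-greater than c. Then the following are equivalent: (1) there exists a vote v placing c at position i and a at position j such that c is the X-winner of P ++ [v] and a is the Y-winner of P ++ [v]; (2) there exists a bijection σ from C∖{c,a} to {1,…,m}∖{i,j} such that for every e ∈ C∖{c,a}: s_X(e) + x_{σ(e)} < s_X(c) + x_i, or these are equal and c is T-greater than e; and s_Y(e) + y_{σ(e)}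 < s_Y(a) + y_j, or these are equal and a is T-greater than e. -/
/-
Combining two different scoring rules by a run-off is not consistent.
Votes on the finite candidate set `C` (with `m = |C|`) are duplicate-free
lists of all candidates (earlier = more preferred); positions are 1-based.
-/

variable {C : Type*} [Fintype C] [DecidableEq C]

/-!
A vote is the same thing as a bijection from the candidates onto the positions `1, …, m`,
and appending it to `P` adds to each candidate's score exactly the score of its own position.
So the winner conditions decouple candidate by candidate, and a vote with `c` at `i` and `a`
at `j` amounts to a bijection of the remaining candidates onto the remaining positions.
-/

open Set Function

theorem Set.bijOn_univ_iff_bijOn_compl_pair {α β : Type*} {f : α → β} {t : Set β} {c a : α}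
    (hca : c ≠ a) (hfca : f c ≠ f a) (hc : f c ∈ t) (ha : f a ∈ t) :
    BijOn f univ t ↔ BijOn f {c, a}ᶜ (t \ {f c, f a}) := by
  constructor
  · intro h
    have h' := (h.sdiff_singleton (mem_univ c)).sdiff_singleton (a := a) (by simp [hca.symm])
    convert h' using 1 <;> ext <;> simp
    tauto
  · intro h
    have h' := (h.insert (a := a) (by simp)).insert (a := c) (by simp [hfca])
    convert h' using 1
    · ext e; by_cases e = c <;> by_cases e = a <;> simp_all
    · ext r; by_cases r = f c <;> by_cases r = f a <;> simp_all

theorem scoreTotal_append_singleton {α : Type*} [DecidableEq α] (s : ℕ → ℝ)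
    (P : List (List α)) (v : List α) (e : α) :
    scoreTotal s (P ++ [v]) e = scoreTotal s P e + s (v.idxOf e + 1) := by
  simp [scoreTotal]

theorem scoringWinner_eq_iff [Nonempty C] (T : LinearOrder C) (s : ℕ → ℝ)
    (Q : List (List C)) (c : C) :
    scoringWinner T s Q = c ↔ ∀ e, e ≠ c →
      scoreTotal s Q e < scoreTotal s Q c ∨
        (scoreTotal s Q e = scoreTotal s Q c ∧ T.lt e c) := by
  let _ := T
  classical
  rw [scoringWinner, Finset.max'_eq_iff]
  simp only [Finset.mem_filter, Finset.mem_univ, true_and]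
  constructor
  · rintro ⟨hc, hle⟩ e hec
    refine (hc e).lt_or_eq.imp id fun heq => ⟨heq, ?_⟩
    exact (hle e fun z => heq ▸ hc z).lt_of_ne hec
  · intro h
    have hc (z : C) : scoreTotal s Q z ≤ scoreTotal s Q c := by
      by_cases hzc : z = c
      · rw [hzc]
      · exact (h z hzc).elim le_of_lt fun h => h.1.le
    refine ⟨hc, fun b hb => ?_⟩
    by_cases hbc : b = c
    · exact hbc.le
    rcases h b hbc with hlt | ⟨-, hlt⟩
    · exact absurd (hb c) (not_le.2 hlt)
    · exact hlt.le

theorem scoringWinner_append_singleton_eq_iff [Nonempty C] (T : LinearOrder C) (s : ℕ → ℝ)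
    (P : List (List C)) (v : List C) (c : C) :
    scoringWinner T s (P ++ [v]) = c ↔ ∀ e, e ≠ c →
      scoreTotal s P e + s (v.idxOf e + 1) < scoreTotal s P c + s (v.idxOf c + 1) ∨
        (scoreTotal s P e + s (v.idxOf e + 1) = scoreTotal s P c + s (v.idxOf c + 1) ∧
          T.lt e c) := by
  simp only [scoringWinner_eq_iff, scoreTotal_append_singleton]

theorem ValidVote.bijOn_idxOf_add_one {v : List C} (hv : ValidVote v) :
    BijOn (fun e => v.idxOf e + 1) univ (Icc 1 (Fintype.card C)) := by
  have hmem (e : C) : e ∈ v := by simp [← List.mem_toFinset, hv.2]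
  have hlen : v.length = Fintype.card C := by
    rw [← Finset.card_univ, ← hv.2, List.toFinset_card_of_nodup hv.1]
  refine ⟨fun e _ => ?_, fun e _ e' _ h => ?_, fun r hr => ?_⟩
  · have := List.idxOf_lt_length_iff.2 (hmem e)
    simp only [mem_Icc]; omega
  · exact (List.idxOf_inj (hmem e)).1 (Nat.succ_injective h)
  · simp only [mem_Icc] at hr
    have hr' : r - 1 < v.length := by omega
    refine ⟨v[r - 1], mem_univ _, ?_⟩
    simp only [List.Nodup.idxOf_getElem hv.1]
    omega

theorem exists_validVote_of_bijOn {τ : C → ℕ} (hτ : BijOn τ univ (Icc 1 (Fintype.card C))) :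
    ∃ v : List C, ValidVote v ∧ ∀ e, v.idxOf e + 1 = τ e := by
  have hbound (e : C) : 1 ≤ τ e ∧ τ e ≤ Fintype.card C := hτ.mapsTo (mem_univ e)
  let f (e : C) : Fin (Fintype.card C) := ⟨τ e - 1, by have := hbound e; omega⟩
  have hf : Injective f := fun e e' h => by
    have := Fin.mk.inj_iff.1 h
    exact hτ.injOn (mem_univ e) (mem_univ e') (by have := hbound e; have := hbound e'; omega)
  let E : C ≃ Fin (Fintype.card C) :=
    Equiv.ofBijective f ((Fintype.bijective_iff_injective_and_card f).2 ⟨hf, by simp⟩)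
  have hnodup : (List.ofFn E.symm).Nodup := List.nodup_ofFn.2 E.symm.injective
  refine ⟨List.ofFn E.symm, ⟨hnodup, ?_⟩, fun e => ?_⟩
  · exact Finset.eq_univ_of_forall fun e =>
      List.mem_toFinset.2 (List.mem_ofFn.2 ⟨E e, E.symm_apply_apply e⟩)
  · have := hnodup.idxOf_getElem (E e) (by simp)
    simp only [List.getElem_ofFn, Fin.eta, Equiv.symm_apply_apply] at this
    rw [this]
    have := hbound e
    simp [E, f]; omega

theorem manipulation_matching_general [Nonempty C]
    (T : LinearOrder C) (x y : ℕ → ℝ)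
    (P : List (List C)) (c a : C) (hca : c ≠ a)
    (i j : ℕ) (hi1 : 1 ≤ i) (hi2 : i ≤ Fintype.card C)
    (hj1 : 1 ≤ j) (hj2 : j ≤ Fintype.card C) (hij : i ≠ j)
    (hXca : scoreTotal x P a + x j < scoreTotal x P c + x i ∨
      (scoreTotal x P a + x j = scoreTotal x P c + x i ∧ T.lt a c))
    (hYac : scoreTotal y P c + y i < scoreTotal y P a + y j ∨
      (scoreTotal y P c + y i = scoreTotal y P a + y j ∧ T.lt c a)) :
    (∃ v : List C, ValidVote v ∧ v.idxOf c + 1 = i ∧ v.idxOf a + 1 = j ∧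
        scoringWinner T x (P ++ [v]) = c ∧ scoringWinner T y (P ++ [v]) = a) ↔
    (∃ σ : C → ℕ,
        Set.BijOn σ {e | e ≠ c ∧ e ≠ a}
          {r | 1 ≤ r ∧ r ≤ Fintype.card C ∧ r ≠ i ∧ r ≠ j} ∧
        ∀ e, e ≠ c → e ≠ a →
          (scoreTotal x P e + x (σ e) < scoreTotal x P c + x i ∨
            (scoreTotal x P e + x (σ e) = scoreTotal x P c + x i ∧ T.lt e c)) ∧
          (scoreTotal y P e + y (σ e) < scoreTotal y P a + y j ∨
            (scoreTotal y P e + y (σ e) = scoreTotal y P a + y j ∧ T.lt e a))) := by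
  have hS : {e | e ≠ c ∧ e ≠ a} = ({c, a}ᶜ : Set C) := by ext; simp
  have hR : {r | 1 ≤ r ∧ r ≤ Fintype.card C ∧ r ≠ i ∧ r ≠ j} =
      Icc 1 (Fintype.card C) \ {i, j} := by
    ext; simp; omega
  have hi : i ∈ Icc 1 (Fintype.card C) := ⟨hi1, hi2⟩
  have hj : j ∈ Icc 1 (Fintype.card C) := ⟨hj1, hj2⟩
  rw [hS, hR]
  constructor
  · rintro ⟨v, hv, rfl, rfl, hwx, hwy⟩
    refine ⟨fun e => v.idxOf e + 1,
      (bijOn_univ_iff_bijOn_compl_pair hca hij hi hj).1 hv.bijOn_idxOf_add_one,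
      fun e hec hea => ⟨?_, ?_⟩⟩
    · exact (scoringWinner_append_singleton_eq_iff T x P v c).1 hwx e hec
    · exact (scoringWinner_append_singleton_eq_iff T y P v a).1 hwy e hea
  · rintro ⟨σ, hσ, hbeat⟩
    let τ (e : C) : ℕ := if e = c then i else if e = a then j else σ e
    have hτc : τ c = i := if_pos rfl
    have hτa : τ a = j := by simp [τ, hca.symm]
    have hτσ : EqOn σ τ {c, a}ᶜ := fun e he => by simp_all [τ]
    have hτ : BijOn τ univ (Icc 1 (Fintype.card C)) := by
      rw [bijOn_univ_iff_bijOn_compl_pair hca (hτc ▸ hτa ▸ hij) (hτc ▸ hi) (hτa ▸ hj),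
        hτc, hτa]
      exact hσ.congr hτσ
    obtain ⟨v, hv, hpos⟩ := exists_validVote_of_bijOn hτ
    refine ⟨v, hv, hpos c ▸ hτc, hpos a ▸ hτa, ?_, ?_⟩
    · refine (scoringWinner_append_singleton_eq_iff T x P v c).2 fun e hec => ?_
      rw [hpos, hpos, hτc]
      by_cases hea : e = a
      · rwa [hea, hτa]
      · rw [← hτσ (by simp [hec, hea])]; exact (hbeat e hec hea).1
    · refine (scoringWinner_append_singleton_eq_iff T y P v a).2 fun e hea => ?_
      rw [hpos, hpos, hτa]
      by_cases hec : e = c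
      · rwa [hec, hτc]
      · rw [← hτσ (by simp [hec, hea])]; exact (hbeat e hec hea).2

/-- Characterisation of single-manipulator votes for a pair of scoring rules
via perfect matchings: fixing (1-based) positions `i ≠ j` for the candidates
`c ≠ a`, and assuming `c` beats `a` under `X` (strictly, or tied with `c`
`T`-greater) and `a` beats `c` under `Y` (strictly, or tied with `a`
`T`-greater) once placed there, there exists a vote `v` placing `c` at
position `i` and `a` at position `j` making `c` the `X`-winner and `a` the
`Y`-winner of `P ++ [v]` iff there is a bijection `σ` from the remaining
candidates onto the remaining positions such that `c` beats every remaining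
candidate under `X` and `a` beats every remaining candidate under `Y`. -/
theorem manipulation_matching [Nonempty C]
    (T : LinearOrder C) (x y : ℕ → ℝ)
    (hx : ∀ r r', 1 ≤ r → r ≤ r' → r' ≤ Fintype.card C → x r' ≤ x r)
    (hy : ∀ r r', 1 ≤ r → r ≤ r' → r' ≤ Fintype.card C → y r' ≤ y r)
    (P : List (List C)) (hP : ValidProfile P)
    (c a : C) (hca : c ≠ a)
    (i j : ℕ) (hi1 : 1 ≤ i) (hi2 : i ≤ Fintype.card C)
    (hj1 : 1 ≤ j) (hj2 : j ≤ Fintype.card C) (hij : i ≠ j)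
    (hXca : scoreTotal x P a + x j < scoreTotal x P c + x i ∨
      (scoreTotal x P a + x j = scoreTotal x P c + x i ∧ T.lt a c))
    (hYac : scoreTotal y P c + y i < scoreTotal y P a + y j ∨
      (scoreTotal y P c + y i = scoreTotal y P a + y j ∧ T.lt c a)) :
    (∃ v : List C, ValidVote v ∧ v.idxOf c + 1 = i ∧ v.idxOf a + 1 = j ∧
        scoringWinner T x (P ++ [v]) = c ∧ scoringWinner T y (P ++ [v]) = a) ↔
    (∃ σ : C → ℕ,
        Set.BijOn σ {e | e ≠ c ∧ e ≠ a}
          {r | 1 ≤ r ∧ r ≤ Fintype.card C ∧ r ≠ i ∧ r ≠ j} ∧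
        ∀ e, e ≠ c → e ≠ a →
          (scoreTotal x P e + x (σ e) < scoreTotal x P c + x i ∨
            (scoreTotal x P e + x (σ e) = scoreTotal x P c + x i ∧ T.lt e c)) ∧
          (scoreTotal y P e + y (σ e) < scoreTotal y P a + y j ∨
            (scoreTotal y P e + y (σ e) = scoreTotal y P a + y j ∧ T.lt e a))) :=
  manipulation_matching_general T x y P c a hca i j hi1 hi2 hj1 hj2 hij hXca hYac
end
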